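/- If G is dicotic and H = H' (equal game values), then G → H = G → H' (equal game values). -/

import Mathlib

universe u

namespace SetTheory

/-- Pre-games, as in the older Mathlib `SetTheory.PGame`. -/
inductive PGame : Type (u + 1)
  | mk : ∀ α β : Type u, (α → PGame) → (β → PGame) → PGame

namespace PGame

def LeftMoves : PGame.{u} → Type u
  | mk l _ _ _ => l

def RightMoves : PGame.{u} → Type u
  | mk _ r _ _ => r

def moveLeft : ∀ g : PGame.{u}, LeftMoves g → PGame.{u}
  | mk _l _ L _ => L

def moveRight : ∀ g : PGame.{u}, RightMoves g → PGame.{u}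
  | mk _ _r _ R => R

/-- Simultaneous definition of `≤` (first component) and `⧏` (second component). -/
noncomputable def leLf (x : PGame.{u}) : PGame.{u} → Prop × Prop :=
  PGame.rec (motive := fun _ => PGame.{u} → Prop × Prop)
    (fun xl xr xL xR IHxl IHxr y =>
      PGame.rec (motive := fun _ => Prop × Prop)
        (fun yl yr yL yR IHyl IHyr =>
          ((∀ i, (IHxl i (mk yl yr yL yR)).2) ∧ (∀ j, (IHyr j).2),
            (∃ i, (IHyl i).1) ∨ (∃ j, (IHxr j (mk yl yr yL yR)).1))) y) x

noncomputable instance : LE PGame.{u} := ⟨fun x y => (leLf x y).1⟩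

def Equiv (x y : PGame.{u}) : Prop := x ≤ y ∧ y ≤ x

instance : HasEquiv PGame.{u} := ⟨Equiv⟩

instance : Zero PGame.{u} := ⟨⟨PEmpty, PEmpty, PEmpty.elim, PEmpty.elim⟩⟩

def neg : PGame.{u} → PGame.{u}
  | mk l r L R => mk r l (fun i => neg (R i)) (fun i => neg (L i))

instance : Neg PGame.{u} := ⟨neg⟩

def addAux (xl xr : Type u) (fL : xl → PGame.{u} → PGame.{u}) (fR : xr → PGame.{u} → PGame.{u}) :
    PGame.{u} → PGame.{u}
  | mk yl yr yL yR =>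
    mk (xl ⊕ yl) (xr ⊕ yr)
      (Sum.elim (fun i => fL i (mk yl yr yL yR)) (fun j => addAux xl xr fL fR (yL j)))
      (Sum.elim (fun i => fR i (mk yl yr yL yR)) (fun j => addAux xl xr fL fR (yR j)))

def add : PGame.{u} → PGame.{u} → PGame.{u}
  | mk xl xr xL xR => addAux xl xr (fun i => add (xL i)) (fun j => add (xR j))

instance : Add PGame.{u} := ⟨add⟩

instance : Sub PGame.{u} := ⟨fun x y => x + -y⟩

def star : PGame.{u} := ⟨PUnit, PUnit, fun _ => 0, fun _ => 0⟩

class inductive Short : PGame.{u} → Type (u + 1)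
  | mk : ∀ {α β : Type u} {L : α → PGame.{u}} {R : β → PGame.{u}} (_ : ∀ i : α, Short (L i))
      (_ : ∀ j : β, Short (R j)) [Fintype α] [Fintype β] [DecidableEq α] [DecidableEq β],
      Short ⟨α, β, L, R⟩

end PGame

end SetTheory

open SetTheory

open scoped PGame

namespace SeqCompound

open Classical in
/-- The sequential compound `G → H` of two pregames. -/
noncomputable def seqc : PGame → PGame → PGame
  | PGame.mk α β L R, H =>
    if Nonempty α then
      if Nonempty β then
        PGame.mk α β (fun a => seqc (L a) H) (fun b => seqc (R b) H)
      else
        PGame.mk α H.RightMoves (fun a => seqc (L a) H) H.moveRight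
    else
      if Nonempty β then
        PGame.mk H.LeftMoves β H.moveLeft (fun b => seqc (R b) H)
      else H

/-- A pregame is dicotic (all-small) if in every subposition,
Left has an option iff Right has an option. -/
def Dicotic : PGame → Prop
  | PGame.mk α β L R =>
    (Nonempty α ↔ Nonempty β) ∧ (∀ a, Dicotic (L a)) ∧ (∀ b, Dicotic (R b))

/-- The canonical nonnegative integer game `{n-1 | }`. -/
def intGame : ℕ → PGame
  | 0 => 0
  | n + 1 => PGame.mk PUnit PEmpty (fun _ => intGame n) PEmpty.elim

/-- `upSum k` is the disjunctive sum `↑¹ + ↑² + ⋯ + ↑ᵏ`. -/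
def upSum : ℕ → PGame
  | 0 => 0
  | k + 1 => upSum k +
      PGame.mk PUnit PUnit (fun _ => 0) (fun _ => PGame.star - upSum k)

/-- `upPow k` is the game `↑^(k+1) = {0 | ∗ - (↑¹ + ⋯ + ↑ᵏ)}`. -/
def upPow (k : ℕ) : PGame :=
  PGame.mk PUnit PUnit (fun _ => 0) (fun _ => PGame.star - upSum k)

/-- Sequential compound of a list of games. -/
noncomputable def seqList : List PGame → PGame
  | [] => 0
  | G :: l => seqc G (seqList l)

end SeqCompound

namespace SetTheory.PGame

lemma lf_mk_of_le_moveLeft {x : PGame.{u}} {yl yr : Type u} {yL : yl → PGame.{u}}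
    {yR : yr → PGame.{u}} {i : yl} (h : x ≤ yL i) : (leLf x (mk yl yr yL yR)).2 := by
  cases x
  exact Or.inl ⟨i, h⟩

lemma mk_lf_of_moveRight_le {y : PGame.{u}} {xl xr : Type u} {xL : xl → PGame.{u}}
    {xR : xr → PGame.{u}} {j : xr} (h : xR j ≤ y) : (leLf (mk xl xr xL xR) y).2 := by
  cases y
  exact Or.inr ⟨j, h⟩

lemma mk_le_mk_of_le {α β : Type u} {L L' : α → PGame.{u}} {R R' : β → PGame.{u}}
    (hL : ∀ a, L a ≤ L' a) (hR : ∀ b, R b ≤ R' b) : mk α β L R ≤ mk α β L' R' :=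
  ⟨fun a => lf_mk_of_le_moveLeft (hL a), fun b => mk_lf_of_moveRight_le (hR b)⟩

lemma mk_equiv_mk_of_equiv {α β : Type u} {L L' : α → PGame.{u}} {R R' : β → PGame.{u}}
    (hL : ∀ a, L a ≈ L' a) (hR : ∀ b, R b ≈ R' b) : mk α β L R ≈ mk α β L' R' :=
  ⟨mk_le_mk_of_le (fun a => (hL a).1) (fun b => (hR b).1),
    mk_le_mk_of_le (fun a => (hL a).2) (fun b => (hR b).2)⟩

end SetTheory.PGame

namespace SeqCompound

open PGame

lemma seqc_mk_of_nonempty {α β : Type u} {L : α → PGame.{u}} {R : β → PGame.{u}}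
    [hα : Nonempty α] [hβ : Nonempty β] (H : PGame.{u}) :
    seqc (mk α β L R) H = mk α β (fun a => seqc (L a) H) (fun b => seqc (R b) H) := by
  rw [seqc, if_pos hα, if_pos hβ]

lemma seqc_mk_of_isEmpty {α β : Type u} {L : α → PGame.{u}} {R : β → PGame.{u}}
    [IsEmpty α] [IsEmpty β] (H : PGame.{u}) : seqc (mk α β L R) H = H := by
  rw [seqc, if_neg (not_nonempty_iff.2 ‹_›), if_neg (not_nonempty_iff.2 ‹_›)]

/-- In a dicotic game `G`, play reaches `H` only at terminal positions of `G`, where `G → H`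
is `H` itself; elsewhere `G → H` keeps the move sets of `G`. -/
theorem Dicotic.seqc_equiv_seqc {G : PGame.{u}} (hG : Dicotic G) {H H' : PGame.{u}}
    (h : H ≈ H') : seqc G H ≈ seqc G H' := by
  induction G with
  | mk α β L R ihL ihR =>
    obtain ⟨hαβ, hL, hR⟩ := hG
    by_cases hα : Nonempty α
    · have : Nonempty β := hαβ.1 hα
      rw [seqc_mk_of_nonempty, seqc_mk_of_nonempty]
      exact mk_equiv_mk_of_equiv (fun a => ihL a (hL a)) (fun b => ihR b (hR b))
    · have : IsEmpty α := not_nonempty_iff.1 hα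
      have : IsEmpty β := not_nonempty_iff.1 (mt hαβ.2 hα)
      rwa [seqc_mk_of_isEmpty, seqc_mk_of_isEmpty]

end SeqCompound

open SeqCompound in
theorem seqc_equiv_of_equiv_general (G H H' : PGame)
    (hG : Dicotic G) (h : H ≈ H') :
    seqc G H ≈ seqc G H' :=
  hG.seqc_equiv_seqc h

open SeqCompound in
/-- if `G` is dicotic and `H = H'` (equal values), then `G → H = G → H'`. -/
theorem seqc_equiv_of_equiv (G H H' : PGame) [PGame.Short G] [PGame.Short H] [PGame.Short H']
    (hG : Dicotic G) (h : H ≈ H') :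
    seqc G H ≈ seqc G H' :=
  seqc_equiv_of_equiv_general G H H' hG h
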